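/- Let Ω ⊆ ℍ be an axially symmetric s-domain and let f : Ω → ℍ be slice regular. Then for every J ∈ 𝕊 and every q = x+yI ∈ Ω (with x, y ∈ ℝ and I ∈ 𝕊), one has f(x+yI) = (1/2)·(f(x+yJ) + f(x−yJ)) + I·(1/2)·(J·(f(x−yJ) − f(x+yJ))). -/

import Mathlib

open Quaternion

noncomputable section

/-- The 2-sphere of imaginary units in the quaternions. -/
def SpH : Set ℍ[ℝ] := {q | q.re = 0 ∧ ‖q‖ = 1}

/-- The slice (complex plane) `L_I = {x + y I : x, y ∈ ℝ}`. -/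
def sliceL (I : ℍ[ℝ]) : Set ℍ[ℝ] := {q | ∃ x y : ℝ, q = (x : ℍ[ℝ]) + y • I}

/-- `f` has continuous partial derivatives on the `I`-slice part of `Ω` and satisfies the
Cauchy–Riemann equation `∂f/∂x + I ∂f/∂y = 0` there. -/
def SliceHolomorphicOn (I : ℍ[ℝ]) (f : ℍ[ℝ] → ℍ[ℝ]) (Ω : Set ℍ[ℝ]) : Prop :=
  ∃ fx fy : ℝ → ℝ → ℍ[ℝ],
    (∀ x y : ℝ, (x : ℍ[ℝ]) + y • I ∈ Ω →
      HasDerivAt (fun t : ℝ => f ((t : ℍ[ℝ]) + y • I)) (fx x y) x) ∧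
    (∀ x y : ℝ, (x : ℍ[ℝ]) + y • I ∈ Ω →
      HasDerivAt (fun t : ℝ => f ((x : ℍ[ℝ]) + t • I)) (fy x y) y) ∧
    ContinuousOn (fun p : ℝ × ℝ => fx p.1 p.2) {p : ℝ × ℝ | (p.1 : ℍ[ℝ]) + p.2 • I ∈ Ω} ∧
    ContinuousOn (fun p : ℝ × ℝ => fy p.1 p.2) {p : ℝ × ℝ | (p.1 : ℍ[ℝ]) + p.2 • I ∈ Ω} ∧
    ∀ x y : ℝ, (x : ℍ[ℝ]) + y • I ∈ Ω → fx x y + I * fy x y = 0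

/-- `f` is slice regular on `Ω`. -/
def SliceRegularOn (f : ℍ[ℝ] → ℍ[ℝ]) (Ω : Set ℍ[ℝ]) : Prop :=
  ∀ I ∈ SpH, SliceHolomorphicOn I f Ω

/-- `Ω` is axially symmetric. -/
def AxSymm (Ω : Set ℍ[ℝ]) : Prop :=
  ∀ (x y : ℝ), ∀ I ∈ SpH, (x : ℍ[ℝ]) + y • I ∈ Ω → ∀ J ∈ SpH, (x : ℍ[ℝ]) + y • J ∈ Ω

/-- `Ω` is an s-domain: a domain meeting the real axis whose slices are connected. -/
def IsSDomain (Ω : Set ℍ[ℝ]) : Prop :=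
  IsOpen Ω ∧ IsConnected Ω ∧ (∃ x : ℝ, (x : ℍ[ℝ]) ∈ Ω) ∧
    ∀ I ∈ SpH, IsConnected (Ω ∩ sliceL I)

/-- The axially symmetric completion of a set `S ⊆ ℍ`. -/
def symmComp (S : Set ℍ[ℝ]) : Set ℍ[ℝ] :=
  {q | ∃ (x y : ℝ) (I : ℍ[ℝ]), I ∈ SpH ∧ q = (x : ℍ[ℝ]) + y • I ∧
    ∃ J ∈ SpH, (x : ℍ[ℝ]) + y • J ∈ S}

/-- A domain of the slice `L_I`: a nonempty connected relatively open subset of `L_I`. -/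
def IsSliceDomain (I : ℍ[ℝ]) (D : Set ℍ[ℝ]) : Prop :=
  D ⊆ sliceL I ∧ IsConnected D ∧ IsOpen {p : ℝ × ℝ | (p.1 : ℍ[ℝ]) + p.2 • I ∈ D}

/-!
Left multiplication by a unit `I ∈ 𝕊` makes `ℍ` a complex Banach space in which `i` acts as `I`.
In these coordinates the Cauchy–Riemann equation `∂ₓf + I ∂_y f = 0` on the slice `L_I ≅ ℂ` says
exactly that `z ↦ f (x + y I)` is holomorphic. Since `c = 1 - IJ` satisfies `I c = c J` (and
`1 + IJ` intertwines `I` with `-J`), the function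
`½ ((1 - IJ) f (x + yJ) + (1 + IJ) f (x - yJ))` satisfies the `I`-Cauchy–Riemann equation too, on
the same domain of `ℂ` by axial symmetry. It agrees with `f (x + y I)` on the real axis, hence on
the whole (connected) slice domain by the identity principle.
-/

open Filter Topology Set

theorem Complex.hasDerivAt_of_cauchyRiemann {E : Type*} [NormedAddCommGroup E] [NormedSpace ℂ E]
    {G Gx Gy : ℂ → E} {z₀ : ℂ}
    (hGx : ∀ᶠ z in 𝓝 z₀, HasDerivAt (fun t : ℝ => G ⟨t, z.im⟩) (Gx z) z.re)
    (hGy : ∀ᶠ z in 𝓝 z₀, HasDerivAt (fun t : ℝ => G ⟨z.re, t⟩) (Gy z) z.im)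
    (hGxc : ContinuousAt Gx z₀) (hGyc : ContinuousAt Gy z₀)
    (hCR : Gy z₀ = Complex.I • Gx z₀) : HasDerivAt G (Gx z₀) z₀ := by
  set e := Complex.equivRealProdCLM
  have hsymm : ContinuousAt e.symm (e z₀) := e.symm.continuous.continuousAt
  have he : Tendsto e.symm (𝓝 (e z₀)) (𝓝 z₀) := by simpa using hsymm.tendsto
  have hlift : ∀ {g : ℂ → E}, ContinuousAt g z₀ →
      ContinuousAt (fun v : ℝ × ℝ => (1 : ℝ →L[ℝ] ℝ).smulRight (g (e.symm v))) (e z₀) :=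
    fun hg => (ContinuousLinearMap.smulRightL ℝ ℝ E 1).continuous.continuousAt.comp
      (ContinuousAt.comp (by simpa using hg) hsymm)
  have hstrict := hasStrictFDerivAt_uncurry_coprod (u := e z₀) (f := fun a b => G ⟨a, b⟩)
    (f₁ := fun a b => (1 : ℝ →L[ℝ] ℝ).smulRight (Gx ⟨a, b⟩))
    (f₂ := fun a b => (1 : ℝ →L[ℝ] ℝ).smulRight (Gy ⟨a, b⟩))
    (he.eventually (hGx.mono fun z hz => hz.hasFDerivAt))
    (he.eventually (hGy.mono fun z hz => hz.hasFDerivAt)) (hlift hGxc) (hlift hGyc)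
  have hreal : HasFDerivAt G _ z₀ := hstrict.hasFDerivAt.comp z₀ e.hasFDerivAt
  refine hasDerivAt_iff_hasFDerivAt.2 (hasFDerivAt_of_restrictScalars ℝ hreal ?_)
  ext c
  show c • Gx z₀ = c.re • Gx z₀ + c.im • Gy z₀
  rw [hCR, ← Complex.coe_smul, ← Complex.coe_smul, smul_smul, ← add_smul, Complex.re_add_im]

theorem Complex.differentiableOn_of_cauchyRiemann {E : Type*} [NormedAddCommGroup E]
    [NormedSpace ℂ E] {G Gx Gy : ℂ → E} {V : Set ℂ} (hV : IsOpen V)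
    (hGx : ∀ z ∈ V, HasDerivAt (fun t : ℝ => G ⟨t, z.im⟩) (Gx z) z.re)
    (hGy : ∀ z ∈ V, HasDerivAt (fun t : ℝ => G ⟨z.re, t⟩) (Gy z) z.im)
    (hGxc : ContinuousOn Gx V) (hGyc : ContinuousOn Gy V)
    (hCR : ∀ z ∈ V, Gy z = Complex.I • Gx z) : DifferentiableOn ℂ G V := fun z hz =>
  have hz' := hV.mem_nhds hz
  (Complex.hasDerivAt_of_cauchyRiemann (eventually_of_mem hz' hGx) (eventually_of_mem hz' hGy)
    (hGxc.continuousAt hz') (hGyc.continuousAt hz') (hCR z hz)).differentiableAt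
    |>.differentiableWithinAt

theorem Complex.frequently_eq_zero_of_forall_ofReal {E : Type*} [Zero E] {F : ℂ → E}
    (hF : ∀ t : ℝ, F t = 0) (x₀ : ℝ) : ∃ᶠ z in 𝓝[≠] (x₀ : ℂ), F z = 0 := by
  have h : Tendsto ((↑) : ℝ → ℂ) (𝓝[≠] x₀) (𝓝[≠] (x₀ : ℂ)) :=
    Complex.continuous_ofReal.continuousWithinAt.tendsto_nhdsWithin fun _ ht =>
      Complex.ofReal_injective.ne ht
  exact h.frequently (Frequently.of_forall hF)

lemma mul_self_eq_neg_one_of_mem_SpH {I : ℍ[ℝ]} (hI : I ∈ SpH) : I * I = -1 := by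
  rw [← sq, (sq_eq_neg_normSq (a := I)).2 hI.1, normSq_eq_norm_mul_self, hI.2, mul_one, coe_one]

lemma neg_mem_SpH {I : ℍ[ℝ]} (hI : I ∈ SpH) : -I ∈ SpH :=
  ⟨by simp [hI.1], by simp [hI.2]⟩

lemma mul_one_sub_mul_eq_one_sub_mul_mul {I J : ℍ[ℝ]} (hI : I * I = -1) (hJ : J * J = -1) :
    I * (1 - I * J) = (1 - I * J) * J := by
  rw [mul_sub, sub_mul, mul_one, one_mul, ← mul_assoc, hI, mul_assoc, hJ]
  simp only [neg_one_mul, mul_neg_one, sub_neg_eq_add, add_comm]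

def sliceMap (I : ℍ[ℝ]) (z : ℂ) : ℍ[ℝ] := (z.re : ℍ[ℝ]) + z.im • I

section sliceMap

variable {I : ℍ[ℝ]}

lemma sliceMap_ofReal (I : ℍ[ℝ]) (t : ℝ) : sliceMap I t = t := by simp [sliceMap]

lemma sliceMap_I (I : ℍ[ℝ]) : sliceMap I Complex.I = I := by simp [sliceMap]

lemma coe_liftAux (hI : I * I = -1) : ⇑(Complex.liftAux I hI) = sliceMap I := by
  ext1 z
  rw [Complex.liftAux_apply, algebraMap_def, sliceMap]

lemma norm_sliceMap (hI : I ∈ SpH) (z : ℂ) : ‖sliceMap I z‖ = ‖z‖ := by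
  have h : normSq (sliceMap I z) = Complex.normSq z := by
    rw [sliceMap, normSq_add, normSq_coe, normSq_smul, normSq_eq_norm_mul_self, hI.2,
      Complex.normSq_apply]
    simp [hI.1]
    ring
  rw [← Real.sqrt_mul_self (norm_nonneg _), ← normSq_eq_norm_mul_self, h, Complex.norm_def]

lemma isometry_sliceMap (hI : I ∈ SpH) : Isometry (sliceMap I) := by
  rw [← coe_liftAux (mul_self_eq_neg_one_of_mem_SpH hI)]
  exact AddMonoidHomClass.isometry_of_norm _ fun z => by
    rw [coe_liftAux, norm_sliceMap hI]

lemma range_sliceMap (I : ℍ[ℝ]) : range (sliceMap I) = sliceL I := by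
  ext q
  constructor
  · rintro ⟨z, rfl⟩
    exact ⟨z.re, z.im, rfl⟩
  · rintro ⟨x, y, rfl⟩
    exact ⟨⟨x, y⟩, rfl⟩

lemma isPreconnected_preimage_sliceMap {Ω : Set ℍ[ℝ]} (hI : I ∈ SpH)
    (hΩ : IsPreconnected (Ω ∩ sliceL I)) : IsPreconnected (sliceMap I ⁻¹' Ω) := by
  rwa [← (isometry_sliceMap hI).isEmbedding.isInducing.isPreconnected_image,
    image_preimage_eq_inter_range, range_sliceMap]

lemma AxSymm.preimage_sliceMap_eq {Ω : Set ℍ[ℝ]} (hΩ : AxSymm Ω) {J : ℍ[ℝ]} (hI : I ∈ SpH)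
    (hJ : J ∈ SpH) : sliceMap J ⁻¹' Ω = sliceMap I ⁻¹' Ω :=
  ext fun _ => ⟨fun h => hΩ _ _ J hJ h I hI, fun h => hΩ _ _ I hI h J hJ⟩

end sliceMap

/-- `ℍ` as a complex vector space, `c • q = sliceMap I c * q`. -/
def SliceSpace (_I : SpH) : Type := ℍ[ℝ]

namespace SliceSpace

variable (I : SpH)

instance : NormedAddCommGroup (SliceSpace I) := inferInstanceAs (NormedAddCommGroup ℍ[ℝ])

instance : CompleteSpace (SliceSpace I) := inferInstanceAs (CompleteSpace ℍ[ℝ])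

instance : Module ℂ (SliceSpace I) :=
  Module.compHom ℍ[ℝ] (Complex.liftAux I.1 (mul_self_eq_neg_one_of_mem_SpH I.2)).toRingHom

def ofQuaternion : ℍ[ℝ] ≃L[ℝ] SliceSpace I where
  toFun q := q
  invFun q := q
  map_add' _ _ := rfl
  map_smul' r q := by
    show r • q = Complex.liftAux I.1 (mul_self_eq_neg_one_of_mem_SpH I.2) (algebraMap ℝ ℂ r) * q
    rw [AlgHom.commutes, Algebra.smul_def]
  left_inv _ := rfl
  right_inv _ := rfl
  continuous_toFun := continuous_id
  continuous_invFun := continuous_id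

lemma smul_ofQuaternion (c : ℂ) (q : ℍ[ℝ]) :
    c • ofQuaternion I q = ofQuaternion I (sliceMap I c * q) := by
  rw [← coe_liftAux (mul_self_eq_neg_one_of_mem_SpH I.2)]
  rfl

lemma norm_ofQuaternion (q : ℍ[ℝ]) : ‖ofQuaternion I q‖ = ‖q‖ := rfl

instance : NormedSpace ℂ (SliceSpace I) where
  norm_smul_le c q := by
    obtain ⟨q, rfl⟩ := (ofQuaternion I).surjective q
    rw [smul_ofQuaternion, norm_ofQuaternion, norm_ofQuaternion, norm_mul, norm_sliceMap I.2]

end SliceSpace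

/-- `SliceHolomorphicOn` read through `x + i y ↦ x + y I`, with `∂ₓF + I ∂_yF = 0` solved for
`∂_yF` (using `I² = -1`). -/
def CauchyRiemannOn (I : ℍ[ℝ]) (F : ℂ → ℍ[ℝ]) (V : Set ℂ) : Prop :=
  ∃ Fx Fy : ℂ → ℍ[ℝ],
    (∀ z ∈ V, HasDerivAt (fun t : ℝ => F ⟨t, z.im⟩) (Fx z) z.re) ∧
    (∀ z ∈ V, HasDerivAt (fun t : ℝ => F ⟨z.re, t⟩) (Fy z) z.im) ∧
    ContinuousOn Fx V ∧ ContinuousOn Fy V ∧ ∀ z ∈ V, Fy z = I * Fx z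

namespace CauchyRiemannOn

variable {I : ℍ[ℝ]} {F G : ℂ → ℍ[ℝ]} {V : Set ℂ}

lemma add (hF : CauchyRiemannOn I F V) (hG : CauchyRiemannOn I G V) :
    CauchyRiemannOn I (F + G) V := by
  obtain ⟨Fx, Fy, hFx, hFy, hFxc, hFyc, hF⟩ := hF
  obtain ⟨Gx, Gy, hGx, hGy, hGxc, hGyc, hG⟩ := hG
  refine ⟨Fx + Gx, Fy + Gy, fun z hz => (hFx z hz).add (hGx z hz),
    fun z hz => (hFy z hz).add (hGy z hz), hFxc.add hGxc, hFyc.add hGyc, fun z hz => ?_⟩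
  simp only [Pi.add_apply, hF z hz, hG z hz, mul_add]

lemma sub (hF : CauchyRiemannOn I F V) (hG : CauchyRiemannOn I G V) :
    CauchyRiemannOn I (F - G) V := by
  obtain ⟨Fx, Fy, hFx, hFy, hFxc, hFyc, hF⟩ := hF
  obtain ⟨Gx, Gy, hGx, hGy, hGxc, hGyc, hG⟩ := hG
  refine ⟨Fx - Gx, Fy - Gy, fun z hz => (hFx z hz).sub (hGx z hz),
    fun z hz => (hFy z hz).sub (hGy z hz), hFxc.sub hGxc, hFyc.sub hGyc, fun z hz => ?_⟩
  simp only [Pi.sub_apply, hF z hz, hG z hz, mul_sub]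

lemma const_smul (r : ℝ) (hF : CauchyRiemannOn I F V) : CauchyRiemannOn I (r • F) V := by
  obtain ⟨Fx, Fy, hFx, hFy, hFxc, hFyc, hF⟩ := hF
  refine ⟨r • Fx, r • Fy, fun z hz => (hFx z hz).const_smul r,
    fun z hz => (hFy z hz).const_smul r, hFxc.const_smul r, hFyc.const_smul r, fun z hz => ?_⟩
  simp only [Pi.smul_apply, hF z hz, mul_smul_comm]

lemma const_mul {J c : ℍ[ℝ]} (hc : I * c = c * J) (hF : CauchyRiemannOn J F V) :
    CauchyRiemannOn I (fun z => c * F z) V := by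
  obtain ⟨Fx, Fy, hFx, hFy, hFxc, hFyc, hF⟩ := hF
  refine ⟨fun z => c * Fx z, fun z => c * Fy z, fun z hz => (hFx z hz).const_mul c,
    fun z hz => (hFy z hz).const_mul c, continuousOn_const.mul hFxc,
    continuousOn_const.mul hFyc, fun z hz => ?_⟩
  simp only [hF z hz, ← mul_assoc, hc]

theorem eqOn_zero (hI : I ∈ SpH) (hF : CauchyRiemannOn I F V) (hV : IsOpen V)
    (hVc : IsPreconnected V) {z₀ : ℂ} (hz₀ : z₀ ∈ V) (hfreq : ∃ᶠ z in 𝓝[≠] z₀, F z = 0) :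
    EqOn F 0 V := by
  obtain ⟨Fx, Fy, hFx, hFy, hFxc, hFyc, hF⟩ := hF
  let e := SliceSpace.ofQuaternion ⟨I, hI⟩
  have hd : DifferentiableOn ℂ (e ∘ F) V := by
    refine Complex.differentiableOn_of_cauchyRiemann (Gx := e ∘ Fx) (Gy := e ∘ Fy) hV
      (fun z hz => e.hasFDerivAt.comp_hasDerivAt _ (hFx z hz))
      (fun z hz => e.hasFDerivAt.comp_hasDerivAt _ (hFy z hz))
      (e.continuous.comp_continuousOn hFxc) (e.continuous.comp_continuousOn hFyc) fun z hz => ?_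
    rw [Function.comp_apply, Function.comp_apply, SliceSpace.smul_ofQuaternion, hF z hz,
      sliceMap_I]
  have hzero := (hd.analyticOnNhd hV).eqOn_zero_of_preconnected_of_frequently_eq_zero hVc hz₀
    (hfreq.mono fun z hz => by simp [hz])
  exact fun z hz => e.map_eq_zero_iff.1 (hzero hz)

end CauchyRiemannOn

lemma SliceHolomorphicOn.cauchyRiemannOn {I : ℍ[ℝ]} {f : ℍ[ℝ] → ℍ[ℝ]} {Ω : Set ℍ[ℝ]}
    (hI : I * I = -1) (hf : SliceHolomorphicOn I f Ω) :
    CauchyRiemannOn I (f ∘ sliceMap I) (sliceMap I ⁻¹' Ω) := by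
  obtain ⟨fx, fy, hfx, hfy, hfxc, hfyc, hCR⟩ := hf
  have hreIm : Continuous fun z : ℂ => (z.re, z.im) :=
    Complex.continuous_re.prodMk Complex.continuous_im
  refine ⟨fun z => fx z.re z.im, fun z => fy z.re z.im, fun z hz => hfx _ _ hz,
    fun z hz => hfy _ _ hz, hfxc.comp hreIm.continuousOn fun z hz => hz,
    hfyc.comp hreIm.continuousOn fun z hz => hz, fun z hz => ?_⟩
  show fy z.re z.im = I * fx z.re z.im
  rw [eq_neg_of_add_eq_zero_left (hCR _ _ hz), mul_neg, ← mul_assoc, hI, neg_one_mul, neg_neg]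

theorem SliceRegularOn.eqOn_sliceMap {f : ℍ[ℝ] → ℍ[ℝ]} {Ω : Set ℍ[ℝ]}
    (hf : SliceRegularOn f Ω) (hΩ : IsOpen Ω) (hax : AxSymm Ω) {x₀ : ℝ} (hx₀ : (x₀ : ℍ[ℝ]) ∈ Ω)
    {I J : ℍ[ℝ]} (hI : I ∈ SpH) (hJ : J ∈ SpH) (hconn : IsPreconnected (Ω ∩ sliceL I)) :
    EqOn (f ∘ sliceMap I)
      (fun z => (1 / 2 : ℝ) •
        ((1 - I * J) * f (sliceMap J z) + (1 + I * J) * f (sliceMap (-J) z)))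
      (sliceMap I ⁻¹' Ω) := by
  have hI2 := mul_self_eq_neg_one_of_mem_SpH hI
  have hJ2 := mul_self_eq_neg_one_of_mem_SpH hJ
  have hcr : ∀ K ∈ SpH, CauchyRiemannOn K (f ∘ sliceMap K) (sliceMap I ⁻¹' Ω) := fun K hK => by
    simpa only [hax.preimage_sliceMap_eq hI hK] using
      (hf K hK).cauchyRiemannOn (mul_self_eq_neg_one_of_mem_SpH hK)
  have hneg : I * (1 + I * J) = (1 + I * J) * -J := by
    simpa only [mul_neg, sub_neg_eq_add] using
      mul_one_sub_mul_eq_one_sub_mul_mul hI2 (J := -J) (by rw [neg_mul_neg, hJ2])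
  set Ψ : ℂ → ℍ[ℝ] := fun z =>
    (1 / 2 : ℝ) • ((1 - I * J) * f (sliceMap J z) + (1 + I * J) * f (sliceMap (-J) z))
  have hdiff : CauchyRiemannOn I (f ∘ sliceMap I - Ψ) (sliceMap I ⁻¹' Ω) :=
    (hcr I hI).sub ((((hcr J hJ).const_mul (mul_one_sub_mul_eq_one_sub_mul_mul hI2 hJ2)).add
      ((hcr (-J) (neg_mem_SpH hJ)).const_mul hneg)).const_smul (1 / 2 : ℝ))
  have hreal : ∀ t : ℝ, (f ∘ sliceMap I - Ψ) t = 0 := by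
    intro t
    simp only [Pi.sub_apply, Function.comp_apply, Ψ, sliceMap_ofReal, ← add_mul,
      sub_add_add_cancel, one_add_one_eq_two, two_mul]
    rw [← two_smul ℝ, smul_smul]
    norm_num
  have hx₀' : (x₀ : ℂ) ∈ sliceMap I ⁻¹' Ω := by rwa [mem_preimage, sliceMap_ofReal]
  exact fun z hz => sub_eq_zero.1 <| hdiff.eqOn_zero hI
    (hΩ.preimage (isometry_sliceMap hI).continuous) (isPreconnected_preimage_sliceMap hI hconn)
    hx₀' (Complex.frequently_eq_zero_of_forall_ofReal hreal x₀) hz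

/-- Representation Formula. -/
theorem representation_formula
    (Ω : Set ℍ[ℝ]) (hΩ : IsSDomain Ω) (hax : AxSymm Ω)
    (f : ℍ[ℝ] → ℍ[ℝ]) (hf : SliceRegularOn f Ω)
    (J : ℍ[ℝ]) (hJ : J ∈ SpH)
    (x y : ℝ) (I : ℍ[ℝ]) (hI : I ∈ SpH) (hq : (x : ℍ[ℝ]) + y • I ∈ Ω) :
    f ((x : ℍ[ℝ]) + y • I) =
      (1 / 2 : ℝ) • (f ((x : ℍ[ℝ]) + y • J) + f ((x : ℍ[ℝ]) - y • J)) +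
        I * ((1 / 2 : ℝ) • (J * (f ((x : ℍ[ℝ]) - y • J) - f ((x : ℍ[ℝ]) + y • J)))) := by
  obtain ⟨hΩopen, -, ⟨x₀, hx₀⟩, hslice⟩ := hΩ
  have h := hf.eqOn_sliceMap hΩopen hax hx₀ hI hJ (hslice I hI).isPreconnected
    (show (⟨x, y⟩ : ℂ) ∈ sliceMap I ⁻¹' Ω from hq)
  simp only [Function.comp_apply, sliceMap, smul_neg, ← sub_eq_add_neg] at h
  rw [h]
  simp only [smul_add, smul_sub, mul_smul_comm, add_mul, sub_mul, one_mul, mul_sub, mul_assoc]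
  abel
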